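/- Let F_1, …, F_r be submodular functions on V with F_j(∅) = 0, and let f_j be the Lovász extension of F_j. Then min_{x ∈ ℝ^V} [ Σ_{j=1}^r f_j(x) + (1/2)‖x‖² ] = − min { (r/2) Σ_{j=1}^r ‖y_j − λ_j‖² : y_j ∈ B(F_j) for all j, λ_1,…,λ_r ∈ ℝ^V with Σ_{j=1}^r λ_j = 0 }, and both the minimum on the left and the minimum on the right are attained. -/

import Mathlib

open Finset
open Finset

def Submodular {n : ℕ} (F : Finset (Fin n) → ℝ) : Prop :=
  ∀ S T : Finset (Fin n), F (S ∪ T) + F (S ∩ T) ≤ F S + F T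

def basePolytope {n : ℕ} (F : Finset (Fin n) → ℝ) : Set (Fin n → ℝ) :=
  {y | (∀ S : Finset (Fin n), ∑ i ∈ S, y i ≤ F S) ∧ ∑ i, y i = F Finset.univ}

def SortsDesc {n : ℕ} (x : Fin n → ℝ) (σ : Equiv.Perm (Fin n)) : Prop :=
  ∀ j k : Fin n, j ≤ k → x (σ k) ≤ x (σ j)

def lovaszVal {n : ℕ} (F : Finset (Fin n) → ℝ) (x : Fin n → ℝ) (σ : Equiv.Perm (Fin n)) : ℝ :=
  ∑ k : Fin n, x (σ k) *
    (F ((Finset.univ.filter (fun j => j ≤ k)).image ⇑σ)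
      - F ((Finset.univ.filter (fun j => j < k)).image ⇑σ))

def IsLovasz {n : ℕ} (F : Finset (Fin n) → ℝ) (f : (Fin n → ℝ) → ℝ) : Prop :=
  ∀ (x : Fin n → ℝ) (σ : Equiv.Perm (Fin n)), SortsDesc x σ → f x = lovaszVal F x σ


/-!
By Edmonds' greedy algorithm the Lovász extension of a submodular `F` with `F ∅ = 0` is the
support function of `B(F)`, so `∑ⱼ fⱼ` is the support function `h` of the compact convex set
`K = B(F₁) + ⋯ + B(Fᵣ)`. Let `s` be the point of `K` nearest to the origin; the variational
inequality `‖s‖² ≤ ⟪t, s⟫` for `t ∈ K` gives `h x + ½‖x‖² ≥ ⟪x, s⟫ + ½‖x‖² ≥ -½‖s‖²`, with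
equality at `x = -s`. On the dual side, Cauchy–Schwarz and `∑ⱼ λⱼ = 0` give
`(r/2) ∑ⱼ ‖yⱼ - λⱼ‖² ≥ ½‖∑ⱼ yⱼ‖² ≥ ½‖s‖²`, with equality for `λⱼ = yⱼ - s / r`.
-/

lemma sum_range_mul_sub_nonneg {a e : ℕ → ℝ} {n : ℕ} (ha : ∀ k, k + 1 < n → a (k + 1) ≤ a k)
    (he : ∀ k, 0 ≤ e k) (he0 : e 0 = 0) (hen : e n = 0) :
    0 ≤ ∑ k ∈ range n, a k * (e (k + 1) - e k) := by
  have hparts := sum_range_by_parts a (fun k => e (k + 1) - e k) n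
  simp only [smul_eq_mul, sum_range_sub (fun k => e k), hen, he0, sub_zero, mul_zero,
    zero_sub] at hparts
  rw [hparts, neg_nonneg]
  refine sum_nonpos fun k hk => mul_nonpos_of_nonpos_of_nonneg ?_ (he _)
  exact sub_nonpos.2 (ha k (by have := mem_range.1 hk; omega))

section Lovasz

variable {n : ℕ}

def prefixSet (σ : Equiv.Perm (Fin n)) (m : ℕ) : Finset (Fin n) :=
  (univ.filter fun j : Fin n => (j : ℕ) < m).image σ

@[simp]
lemma prefixSet_zero (σ : Equiv.Perm (Fin n)) : prefixSet σ 0 = ∅ := by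
  simp [prefixSet]

@[simp]
lemma prefixSet_self (σ : Equiv.Perm (Fin n)) : prefixSet σ n = univ := by
  simp [prefixSet]

lemma apply_notMem_prefixSet (σ : Equiv.Perm (Fin n)) (k : Fin n) :
    σ k ∉ prefixSet σ k := by
  simp [prefixSet]

lemma prefixSet_succ (σ : Equiv.Perm (Fin n)) (k : Fin n) :
    prefixSet σ (k + 1) = insert (σ k) (prefixSet σ k) := by
  ext i
  simp only [prefixSet, mem_image, mem_filter, mem_univ, true_and, mem_insert,
    Nat.lt_succ_iff_lt_or_eq, Fin.val_inj, or_and_right, exists_or, exists_eq_left]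
  grind

lemma lovaszVal_eq_sum_prefixSet (F : Finset (Fin n) → ℝ) (x : Fin n → ℝ)
    (σ : Equiv.Perm (Fin n)) :
    lovaszVal F x σ = ∑ k, x (σ k) * (F (prefixSet σ (k + 1)) - F (prefixSet σ k)) := by
  simp only [lovaszVal, prefixSet, Fin.le_def, Fin.lt_def, Nat.lt_succ_iff]

lemma lovaszVal_sub (F G : Finset (Fin n) → ℝ) (x : Fin n → ℝ) (σ : Equiv.Perm (Fin n)) :
    lovaszVal (F - G) x σ = lovaszVal F x σ - lovaszVal G x σ := by
  simp only [lovaszVal, Pi.sub_apply, ← sum_sub_distrib]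
  exact sum_congr rfl fun k _ => by ring

lemma lovaszVal_nonneg {G : Finset (Fin n) → ℝ} {x : Fin n → ℝ} {σ : Equiv.Perm (Fin n)}
    (hσ : SortsDesc x σ) (hG : ∀ S, 0 ≤ G S) (hG0 : G ∅ = 0) (hGuniv : G univ = 0) :
    0 ≤ lovaszVal G x σ := by
  set a : ℕ → ℝ := fun k => if h : k < n then x (σ ⟨k, h⟩) else 0
  have hsum : lovaszVal G x σ
      = ∑ k ∈ range n, a k * (G (prefixSet σ (k + 1)) - G (prefixSet σ k)) := by
    rw [lovaszVal_eq_sum_prefixSet, ← Fin.sum_univ_eq_sum_range]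
    simp [a]
  rw [hsum]
  refine sum_range_mul_sub_nonneg (fun k hk => ?_) (fun k => hG _) (by simp [hG0])
    (by simp [hGuniv])
  simp only [a, dif_pos hk, dif_pos (Nat.lt_of_succ_lt hk)]
  exact hσ _ _ (Fin.mk_le_mk.2 k.le_succ)

lemma exists_sortsDesc (x : Fin n → ℝ) : ∃ σ : Equiv.Perm (Fin n), SortsDesc x σ :=
  ⟨Tuple.sort (-x), fun _ _ hjk => by simpa using Tuple.monotone_sort (-x) hjk⟩

def greedyVector (F : Finset (Fin n) → ℝ) (σ : Equiv.Perm (Fin n)) (i : Fin n) : ℝ :=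
  F (prefixSet σ (σ.symm i + 1)) - F (prefixSet σ (σ.symm i))

@[simp]
lemma greedyVector_apply (F : Finset (Fin n) → ℝ) (σ : Equiv.Perm (Fin n)) (k : Fin n) :
    greedyVector F σ (σ k) = F (prefixSet σ (k + 1)) - F (prefixSet σ k) := by
  simp [greedyVector]

lemma dotProduct_greedyVector (F : Finset (Fin n) → ℝ) (x : Fin n → ℝ)
    (σ : Equiv.Perm (Fin n)) : x ⬝ᵥ greedyVector F σ = lovaszVal F x σ := by
  rw [lovaszVal_eq_sum_prefixSet, dotProduct, ← Equiv.sum_comp σ]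
  simp

lemma greedyVector_modular (y : Fin n → ℝ) (σ : Equiv.Perm (Fin n)) :
    greedyVector (fun S => ∑ i ∈ S, y i) σ = y := by
  funext i
  obtain ⟨k, rfl⟩ := σ.surjective i
  rw [greedyVector_apply, prefixSet_succ, sum_insert (apply_notMem_prefixSet σ k)]
  ring

lemma lovaszVal_modular (y x : Fin n → ℝ) (σ : Equiv.Perm (Fin n)) :
    lovaszVal (fun S => ∑ i ∈ S, y i) x σ = x ⬝ᵥ y := by
  rw [← dotProduct_greedyVector, greedyVector_modular]

lemma dotProduct_le_lovaszVal {F : Finset (Fin n) → ℝ} (hF0 : F ∅ = 0) {x y : Fin n → ℝ}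
    (hy : y ∈ basePolytope F) {σ : Equiv.Perm (Fin n)} (hσ : SortsDesc x σ) :
    x ⬝ᵥ y ≤ lovaszVal F x σ := by
  have h := lovaszVal_nonneg (G := F - fun S => ∑ i ∈ S, y i) hσ
    (fun S => sub_nonneg.2 (hy.1 S)) (by simp [hF0]) (by simp [hy.2])
  rwa [lovaszVal_sub, lovaszVal_modular, sub_nonneg] at h

lemma sum_greedyVector_prefixSet {F : Finset (Fin n) → ℝ} (hF0 : F ∅ = 0)
    (σ : Equiv.Perm (Fin n)) {m : ℕ} (hm : m ≤ n) :
    ∑ i ∈ prefixSet σ m, greedyVector F σ i = F (prefixSet σ m) := by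
  induction m with
  | zero => simp [hF0]
  | succ m ih =>
    have hsucc := prefixSet_succ σ ⟨m, hm⟩
    rw [hsucc, sum_insert (apply_notMem_prefixSet σ ⟨m, hm⟩), ih (by omega),
      greedyVector_apply, ← hsucc]
    ring

-- Edmonds' greedy argument: submodularity is applied to `S ∩ P_{m+1}` and `P_m`, whose union
-- is `P_{m+1}` and whose intersection is `S ∩ P_m` when `σ m ∈ S`.
lemma sum_greedyVector_inter_prefixSet_le {F : Finset (Fin n) → ℝ} (hF0 : F ∅ = 0)
    (hF : Submodular F) (σ : Equiv.Perm (Fin n)) (S : Finset (Fin n)) {m : ℕ} (hm : m ≤ n) :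
    ∑ i ∈ S ∩ prefixSet σ m, greedyVector F σ i ≤ F (S ∩ prefixSet σ m) := by
  induction m with
  | zero => simp [hF0]
  | succ m ih =>
    set k : Fin n := ⟨m, hm⟩
    have hk : σ k ∉ prefixSet σ m := apply_notMem_prefixSet σ k
    have hsucc : prefixSet σ (m + 1) = insert (σ k) (prefixSet σ m) := prefixSet_succ σ k
    have hgreedy : greedyVector F σ (σ k) = F (prefixSet σ (m + 1)) - F (prefixSet σ m) :=
      greedyVector_apply F σ k
    by_cases hkS : σ k ∈ S
    · have hunion : insert (σ k) (S ∩ prefixSet σ m) ∪ prefixSet σ m = prefixSet σ (m + 1) := by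
        rw [hsucc, insert_union, union_eq_right.2 inter_subset_right]
      have hinter : insert (σ k) (S ∩ prefixSet σ m) ∩ prefixSet σ m = S ∩ prefixSet σ m := by
        rw [insert_inter_of_notMem hk, inter_assoc, inter_self]
      have hsub := hF (insert (σ k) (S ∩ prefixSet σ m)) (prefixSet σ m)
      rw [hunion, hinter] at hsub
      rw [hsucc, inter_insert_of_mem hkS, sum_insert fun h => hk (mem_inter.1 h).2, hgreedy]
      linarith [ih (by omega)]
    · rw [hsucc, inter_insert_of_notMem hkS]
      exact ih (by omega)

lemma greedyVector_mem_basePolytope {F : Finset (Fin n) → ℝ} (hF0 : F ∅ = 0)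
    (hF : Submodular F) (σ : Equiv.Perm (Fin n)) : greedyVector F σ ∈ basePolytope F := by
  refine ⟨fun S => ?_, ?_⟩
  · simpa using sum_greedyVector_inter_prefixSet_le hF0 hF σ S le_rfl
  · simpa using sum_greedyVector_prefixSet hF0 σ le_rfl

lemma IsLovasz.isGreatest_dotProduct {F : Finset (Fin n) → ℝ} {f : (Fin n → ℝ) → ℝ}
    (hf : IsLovasz F f) (hF0 : F ∅ = 0) (hF : Submodular F) (x : Fin n → ℝ) :
    IsGreatest ((x ⬝ᵥ ·) '' basePolytope F) (f x) := by
  obtain ⟨σ, hσ⟩ := exists_sortsDesc x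
  rw [hf x σ hσ]
  refine ⟨⟨_, greedyVector_mem_basePolytope hF0 hF σ, dotProduct_greedyVector F x σ⟩, ?_⟩
  rintro _ ⟨y, hy, rfl⟩
  exact dotProduct_le_lovaszVal hF0 hy hσ

end Lovasz

section BasePolytope

variable {n : ℕ}

lemma convex_basePolytope (F : Finset (Fin n) → ℝ) : Convex ℝ (basePolytope F) := by
  intro y hy z hz a b ha hb hab
  have hsum : ∀ S : Finset (Fin n),
      ∑ i ∈ S, (a • y + b • z) i = a * ∑ i ∈ S, y i + b * ∑ i ∈ S, z i := by
    intro S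
    simp only [Pi.add_apply, Pi.smul_apply, smul_eq_mul, sum_add_distrib, mul_sum]
  refine ⟨fun S => ?_, ?_⟩
  · have hFS : F S = a * F S + b * F S := by rw [← add_mul, hab, one_mul]
    rw [hsum]
    nlinarith [mul_le_mul_of_nonneg_left (hy.1 S) ha, mul_le_mul_of_nonneg_left (hz.1 S) hb]
  · rw [hsum, hy.2, hz.2, ← add_mul, hab, one_mul]

lemma basePolytope_subset_pi_Icc (F : Finset (Fin n) → ℝ) :
    basePolytope F ⊆ Set.univ.pi fun i => Set.Icc (F univ - F (univ.erase i)) (F {i}) := by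
  intro y hy i _
  have hsplit := sum_erase_add univ y (mem_univ i)
  refine ⟨?_, by simpa using hy.1 {i}⟩
  linarith [hy.1 (univ.erase i), hy.2]

lemma isClosed_basePolytope (F : Finset (Fin n) → ℝ) : IsClosed (basePolytope F) := by
  simp only [basePolytope, Set.ofPred_and, Set.ofPred_forall]
  refine IsClosed.inter ?_ (isClosed_eq (by fun_prop) continuous_const)
  exact isClosed_iInter fun S => isClosed_le (by fun_prop) continuous_const

lemma isCompact_basePolytope (F : Finset (Fin n) → ℝ) : IsCompact (basePolytope F) :=
  (isCompact_univ_pi fun _ => isCompact_Icc).of_isClosed_subset (isClosed_basePolytope F)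
    (basePolytope_subset_pi_Icc F)

end BasePolytope

section Duality

variable {ι κ : Type*} [Fintype ι] [Fintype κ]

lemma dotProduct_self_le_of_isMinOn {K : Set (ι → ℝ)} (hK : Convex ℝ K) {s t : ι → ℝ}
    (hs : s ∈ K) (hmin : IsMinOn (fun v => v ⬝ᵥ v) K s) (ht : t ∈ K) :
    s ⬝ᵥ s ≤ t ⬝ᵥ s := by
  set d := t - s with hd
  -- Minimality along the segment `s + ε d`, `0 < ε ≤ 1`, divided by `ε`, as `ε → 0⁺`.
  have hsegment : ∀ ε ∈ Set.Ioc (0 : ℝ) 1, 0 ≤ 2 * (s ⬝ᵥ d) + ε * (d ⬝ᵥ d) := by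
    rintro ε ⟨hε0, hε1⟩
    have hle : s ⬝ᵥ s ≤ (s + ε • d) ⬝ᵥ (s + ε • d) :=
      hmin (hK.add_smul_sub_mem hs ht ⟨hε0.le, hε1⟩)
    simp only [add_dotProduct, dotProduct_add, smul_dotProduct, dotProduct_smul, smul_eq_mul,
      dotProduct_comm d s] at hle
    refine le_of_mul_le_mul_left ?_ hε0
    nlinarith
  have hlim : Filter.Tendsto (fun ε : ℝ => 2 * (s ⬝ᵥ d) + ε * (d ⬝ᵥ d))
      (nhdsWithin 0 (Set.Ioi 0)) (nhds (2 * (s ⬝ᵥ d))) := by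
    refine tendsto_nhdsWithin_of_tendsto_nhds ?_
    simpa using (continuous_const.add (continuous_id.mul continuous_const)).tendsto
      (0 : ℝ) (f := fun ε : ℝ => 2 * (s ⬝ᵥ d) + ε * (d ⬝ᵥ d))
  have hsd : 0 ≤ s ⬝ᵥ d := by
    have := ge_of_tendsto hlim (Filter.eventually_of_mem (Ioc_mem_nhdsGT zero_lt_one) hsegment)
    linarith
  rw [dotProduct_sub, dotProduct_comm s t] at hsd
  linarith

lemma isLeast_add_half_dotProduct_self {K : Set (ι → ℝ)} (hK : Convex ℝ K) {s : ι → ℝ}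
    (hs : s ∈ K) (hmin : IsMinOn (fun v => v ⬝ᵥ v) K s) {h : (ι → ℝ) → ℝ}
    (hh : ∀ x, IsGreatest ((x ⬝ᵥ ·) '' K) (h x)) :
    IsLeast (Set.range fun x => h x + 1 / 2 * x ⬝ᵥ x) (-(1 / 2 * s ⬝ᵥ s)) := by
  refine ⟨⟨-s, ?_⟩, ?_⟩
  · obtain ⟨t, ht, hht : -s ⬝ᵥ t = h (-s)⟩ := (hh (-s)).1
    have hupper : h (-s) ≤ -(s ⬝ᵥ s) := by
      have hst := dotProduct_self_le_of_isMinOn hK hs hmin ht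
      rw [← hht, neg_dotProduct, dotProduct_comm]
      exact neg_le_neg hst
    have hlower : -(s ⬝ᵥ s) ≤ h (-s) := by
      simpa using (hh (-s)).2 ⟨s, hs, rfl⟩
    simp only [neg_dotProduct, dotProduct_neg, neg_neg]
    linarith
  · rintro _ ⟨x, rfl⟩
    have hxs : x ⬝ᵥ s ≤ h x := (hh x).2 ⟨s, hs, rfl⟩
    have hsq : 0 ≤ (x + s) ⬝ᵥ (x + s) := sum_nonneg fun i _ => mul_self_nonneg _
    simp only [add_dotProduct, dotProduct_add, dotProduct_comm s x] at hsq
    linarith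

lemma isGreatest_dotProduct_image_sum {B : κ → Set (ι → ℝ)} {a : κ → ℝ} (x : ι → ℝ)
    (ha : ∀ j, IsGreatest ((x ⬝ᵥ ·) '' B j) (a j)) :
    IsGreatest ((x ⬝ᵥ ·) '' ((fun y => ∑ j, y j) '' Set.univ.pi B)) (∑ j, a j) := by
  refine ⟨?_, ?_⟩
  · choose y hyB hy using fun j => (ha j).1
    exact ⟨∑ j, y j, ⟨y, fun j _ => hyB j, rfl⟩, by simp [dotProduct_sum, hy]⟩
  · rintro _ ⟨_, ⟨y, hyB, rfl⟩, rfl⟩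
    change x ⬝ᵥ ∑ j, y j ≤ _
    rw [dotProduct_sum]
    exact sum_le_sum fun j _ => (ha j).2 ⟨y j, hyB j trivial, rfl⟩

lemma sum_dotProduct_self_le (v : κ → ι → ℝ) :
    (∑ j, v j) ⬝ᵥ (∑ j, v j) ≤ Fintype.card κ * ∑ j, v j ⬝ᵥ v j := by
  simp only [dotProduct, Finset.sum_apply, mul_sum]
  rw [sum_comm (s := univ (α := κ))]
  refine sum_le_sum fun i _ => ?_
  simpa [sq, mul_sum] using sq_sum_le_card_mul_sum_sq (s := univ) (f := fun j => v j i)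

lemma isLeast_card_mul_sum_dotProduct_self {B : κ → Set (ι → ℝ)} {s : ι → ℝ}
    (hs : s ∈ (fun y => ∑ j, y j) '' Set.univ.pi B)
    (hmin : IsMinOn (fun v => v ⬝ᵥ v) ((fun y => ∑ j, y j) '' Set.univ.pi B) s) :
    IsLeast {v | ∃ y lam : κ → ι → ℝ, (∀ j, y j ∈ B j) ∧ ∑ j, lam j = 0 ∧
      v = (Fintype.card κ / 2) * ∑ j, (y j - lam j) ⬝ᵥ (y j - lam j)} (1 / 2 * s ⬝ᵥ s) := by
  obtain ⟨y, hyB, rfl⟩ := hs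
  refine ⟨?_, ?_⟩
  · rcases isEmpty_or_nonempty κ with hκ | hκ
    · exact ⟨y, y, fun j => hyB j trivial, by simp, by simp⟩
    have hc : (Fintype.card κ : ℝ) ≠ 0 := Nat.cast_ne_zero.2 Fintype.card_ne_zero
    refine ⟨y, fun j => y j - (Fintype.card κ : ℝ)⁻¹ • ∑ j, y j, fun j => hyB j trivial, ?_, ?_⟩
    · rw [sum_sub_distrib, sum_const, card_univ, ← Nat.cast_smul_eq_nsmul ℝ, smul_smul,
        mul_inv_cancel₀ hc, one_smul, sub_self]
    · simp only [sub_sub_cancel, smul_dotProduct, dotProduct_smul, smul_eq_mul, sum_const,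
        card_univ, nsmul_eq_mul]
      field_simp
  · rintro _ ⟨z, lam, hzB, hlam, rfl⟩
    have hsum : ∑ j, (z j - lam j) = ∑ j, z j := by rw [sum_sub_distrib, hlam, sub_zero]
    have hcs := sum_dotProduct_self_le fun j => z j - lam j
    have hle := hmin ⟨z, fun j _ => hzB j, rfl⟩
    rw [hsum] at hcs
    simp only [Set.mem_ofPred_eq] at hle
    linarith

end Duality

/-- Lemma 2, dual of the proximal problem as a best approximation
problem in the product space:
`min_x [Σ_j f_j(x) + ½‖x‖²] = − min {(r/2) Σ_j ‖y_j − λ_j‖² : y_j ∈ B(F_j), Σ_j λ_j = 0}`,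
with both minima attained. -/
theorem statement5 {n r : ℕ} (F : Fin r → Finset (Fin n) → ℝ)
    (hF0 : ∀ j, F j ∅ = 0) (hF : ∀ j, Submodular (F j))
    (f : Fin r → (Fin n → ℝ) → ℝ) (hf : ∀ j, IsLovasz (F j) (f j)) :
    ∃ m : ℝ,
      IsLeast (Set.range (fun x : Fin n → ℝ =>
        (∑ j, f j x) + (1/2) * ∑ i, (x i)^2)) m ∧
      IsLeast {v : ℝ | ∃ y lam : Fin r → Fin n → ℝ,
        (∀ j, y j ∈ basePolytope (F j)) ∧ (∑ j, lam j) = 0 ∧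
        v = ((r : ℝ)/2) * ∑ j, ∑ i, (y j i - lam j i)^2} (-m) := by
  set K := (fun y : Fin r → Fin n → ℝ => ∑ j, y j) '' Set.univ.pi fun j => basePolytope (F j)
  have hKconvex : Convex ℝ K := (convex_pi fun j _ => convex_basePolytope (F j)).is_linear_image
    ⟨fun _ _ => sum_add_distrib, fun _ _ => by rw [smul_sum]; rfl⟩
  have hKcompact : IsCompact K :=
    (isCompact_univ_pi fun j => isCompact_basePolytope (F j)).image (by fun_prop)
  have hKnonempty : K.Nonempty :=
    ⟨_, fun j => greedyVector (F j) 1, fun j _ => greedyVector_mem_basePolytope (hF0 j) (hF j) 1,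
      rfl⟩
  obtain ⟨s, hs, hmin⟩ := hKcompact.exists_isMinOn hKnonempty
    (Continuous.continuousOn (by fun_prop : Continuous fun v : Fin n → ℝ => v ⬝ᵥ v))
  have hsupport (x : Fin n → ℝ) : IsGreatest ((x ⬝ᵥ ·) '' K) (∑ j, f j x) :=
    isGreatest_dotProduct_image_sum x fun j => (hf j).isGreatest_dotProduct (hF0 j) (hF j) x
  refine ⟨-(1 / 2 * s ⬝ᵥ s), ?_, ?_⟩
  · simpa only [dotProduct, ← sq] using isLeast_add_half_dotProduct_self hKconvex hs hmin hsupport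
  · simpa only [dotProduct, Pi.sub_apply, ← sq, Fintype.card_fin, neg_neg] using
      isLeast_card_mul_sum_dotProduct_self hs hmin
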